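/- Let E, R be finite sets with embeddings e : E → ℝ^d and w : R → ℝ^d, and let φ(s,r,o) = ∑_i e(s)_i w(r)_i e(o)_i be the CP score. Then the partition function of the squared score satisfies ∑_{s∈E} ∑_{r∈R} ∑_{o∈E} φ(s,r,o)² = ∑_{i=1}^d ∑_{j=1}^d A_{ij} B_{ij} A'_{ij}, where A_{ij} = ∑_{s∈E} e(s)_i e(s)_j (using subject embeddings), B_{ij} = ∑_{r∈R} w(r)_i w(r)_j, and A'_{ij} = ∑_{o∈E} e(o)_i e(o)_j (using object embeddings). (If subject and object embedding maps differ, use the respective Gram matrices.) -/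

import Mathlib

/-!
Expanding the square turns `φ(s,r,o)²` into a sum over coordinate pairs `(i, j)` of a product of
a subject factor, a relation factor and an object factor. Pulling the sum over `(i, j)` outside,
the sums over `s`, `r`, `o` separate and each produces an entry of the corresponding Gram matrix.
-/

open Finset

section
variable {ι α β γ S : Type*} [Fintype ι] [Fintype α] [Fintype β] [Fintype γ]

theorem sum_comm_sum_sum [AddCommMonoid S] (f : α → ι → ι → S) :
    ∑ x, ∑ i, ∑ j, f x i j = ∑ i, ∑ j, ∑ x, f x i j := by
  rw [sum_comm]
  exact Fintype.sum_congr _ _ fun i => sum_comm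

variable [CommSemiring S]

theorem sq_sum_mul_mul (x y z : ι → S) :
    (∑ i, x i * y i * z i) ^ 2 = ∑ i, ∑ j, x i * x j * (y i * y j) * (z i * z j) := by
  rw [sq, sum_mul_sum]
  exact Fintype.sum_congr _ _ fun i => Fintype.sum_congr _ _ fun j => by ring

theorem sum_mul_sum_mul_sum (a : α → S) (b : β → S) (c : γ → S) :
    (∑ x, a x) * (∑ y, b y) * (∑ z, c z) = ∑ x, ∑ y, ∑ z, a x * b y * c z := by
  rw [sum_mul_sum, sum_mul]
  simp_rw [sum_mul_sum]

end

theorem squared_cp_partition_function_gram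
    {E R : Type*} [Fintype E] [Fintype R] (d : ℕ)
    (eS : E → Fin d → ℝ) (eO : E → Fin d → ℝ) (w : R → Fin d → ℝ) :
    ∑ s : E, ∑ r : R, ∑ o : E,
        (∑ i : Fin d, eS s i * w r i * eO o i) ^ 2 =
      ∑ i : Fin d, ∑ j : Fin d,
        (∑ s : E, eS s i * eS s j) * (∑ r : R, w r i * w r j) *
          (∑ o : E, eO o i * eO o j) := by
  simp_rw [sq_sum_mul_mul, sum_mul_sum_mul_sum]
  simp_rw [← sum_comm_sum_sum]
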